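/- Let K be a field of characteristic 0 and q ∈ K with q ≠ 0. In the setting of the fermionic CAR algebra with Fiore's deformed fermionic generators, the diagonal deformed anticommutation relations hold: A↓·A⁺_↓ + A⁺_↓·A↓ = 1 and A↑·A⁺_↑ + A⁺_↑·A↑ = q⁻²·1 + (1 − q⁻²)·A⁺_↓·A↓. -/

import Mathlib

/-!
Conjugating by `g := q^{-n↓}`, which commutes with `a↑` and `a⁺_↑` (each anticommutes with both
`a↓` and `a⁺_↓`), turns the left side of the second relation into `(a↑ a⁺_↑ + a⁺_↑ a↑) g² = g²`.
Since `n↓` is idempotent (`a↓² = 0` because `2 a↓² = 0` and `2` is invertible), `g² = q^{-2 n↓}`,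
and rewriting `n↓ = 1 - a⁺_↓ a↓` gives the right side.
-/

theorem eq_zero_of_add_self_eq_zero (K : Type*) {M : Type*} [DivisionRing K] [CharZero K]
    [AddCommGroup M] [Module K M] {x : M} (h : x + x = 0) : x = 0 := by
  rw [← one_smul K x, ← inv_mul_cancel₀ (two_ne_zero : (2 : K) ≠ 0), mul_smul, two_smul, h,
    smul_zero]

section Ring

variable {R : Type*} [Ring R]

theorem isIdempotentElem_mul_of_add_eq_one {y y' : R} (hyy : y * y = 0)
    (h : y * y' + y' * y = 1) : IsIdempotentElem (y * y') := by
  have hy'y : y' * y = 1 - y * y' := eq_sub_of_add_eq' h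
  calc y * y' * (y * y') = y * (y' * y) * y' := by simp only [mul_assoc]
    _ = y * y' - y * y * (y' * y') := by rw [hy'y]; noncomm_ring
    _ = y * y' := by rw [hyy, zero_mul, sub_zero]

theorem commute_mul_of_anticommute {x y z : R} (hy : x * y + y * x = 0)
    (hz : x * z + z * x = 0) : Commute x (y * z) := by
  rw [add_eq_zero_iff_eq_neg] at hy hz
  calc x * (y * z) = -(y * (x * z)) := by rw [← mul_assoc, hy, neg_mul, mul_assoc]
    _ = y * z * x := by rw [hz, mul_neg, neg_neg, mul_assoc]

theorem anticommutator_conj_eq {g x x' : R} (hx : Commute g x) (hx' : Commute g x') :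
    x * g * (g * x') + g * x' * (x * g) = (x * x' + x' * x) * (g * g) := by
  have hxg : x * g * (g * x') = x * x' * (g * g) := by
    rw [← mul_assoc, mul_assoc x g g, mul_assoc, (hx'.mul_left hx').eq, ← mul_assoc]
  have hgx : g * x' * (x * g) = x' * x * (g * g) := by
    rw [hx'.eq, mul_assoc, ← mul_assoc g x g, hx.eq, mul_assoc x, ← mul_assoc]
  rw [hxg, hgx, add_mul]

end Ring

theorem IsIdempotentElem.one_add_sub_one_smul_mul {K A : Type*} [CommRing K] [Ring A]
    [Algebra K A] {e : A} (he : IsIdempotentElem e) (s t : K) :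
    (1 + (s - 1) • e) * (1 + (t - 1) • e) = 1 + (s * t - 1) • e := by
  simp only [add_mul, mul_add, one_mul, mul_one, smul_mul_smul_comm, he.eq]
  module

theorem deformed_fermionic_diagonal_relations_general
    (K : Type*) [Field K] [CharZero K] (𝒜 : Type*) [Ring 𝒜] [Algebra K 𝒜]
    (q : K) (a ap : Bool → 𝒜)
    (haa : ∀ i j, a i * a j + a j * a i = 0)
    (hpp : ∀ i j, ap i * ap j + ap j * ap i = 0)
    (hap : ∀ i j, a i * ap j + ap j * a i = if i = j then 1 else 0) :
    let qn : 𝒜 := 1 + (q⁻¹ - 1) • (a false * ap false)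
    let Apu : 𝒜 := qn * ap true
    let Au : 𝒜 := a true * qn
    let Apd : 𝒜 := ap false
    let Ad : 𝒜 := a false
    Ad * Apd + Apd * Ad = 1 ∧
      Au * Apu + Apu * Au = (q ^ 2)⁻¹ • (1 : 𝒜) + (1 - (q ^ 2)⁻¹) • (Apd * Ad) := by
  intro qn Apu Au Apd Ad
  have hdown : a false * ap false + ap false * a false = 1 := by simpa using hap false false
  have hup : a true * ap true + ap true * a true = 1 := by simpa using hap true true
  have hn : IsIdempotentElem (a false * ap false) :=
    isIdempotentElem_mul_of_add_eq_one (eq_zero_of_add_self_eq_zero K (haa false false)) hdown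
  have hqn : ∀ x, Commute (a false * ap false) x → Commute qn x := fun x hx =>
    (Commute.one_left x).add_left (hx.smul_left _)
  have hqn_a : Commute qn (a true) :=
    hqn _ (commute_mul_of_anticommute (haa true false) (by simpa using hap true false)).symm
  have hqn_ap : Commute qn (ap true) :=
    hqn _ (commute_mul_of_anticommute (by simpa [add_comm] using hap false true) (hpp true false)).symm
  refine ⟨hdown, ?_⟩
  calc Au * Apu + Apu * Au = qn * qn := by
        rw [anticommutator_conj_eq hqn_a hqn_ap, hup, one_mul]
    _ = 1 + ((q ^ 2)⁻¹ - 1) • (a false * ap false) := by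
        rw [hn.one_add_sub_one_smul_mul, ← mul_inv, ← sq]
    _ = (q ^ 2)⁻¹ • (1 : 𝒜) + (1 - (q ^ 2)⁻¹) • (Apd * Ad) := by
        rw [eq_sub_of_add_eq hdown]
        module

/-- **Diagonal deformed anticommutation relations for Fiore's deformed fermions.**
In a unital associative algebra over a field `K` of characteristic 0 with elements
`a↑ = a true`, `a↓ = a false`, `a⁺_↑ = ap true`, `a⁺_↓ = ap false` satisfying the CAR,
the deformed generators `A⁺_↑ = q^{-n↓} a⁺_↑`, `A↑ = a↑ q^{-n↓}`, `A⁺_↓ = a⁺_↓`,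
`A↓ = a↓` (with `n↓ = a↓ a⁺_↓` and `q^{-n↓} = 1 + (q⁻¹ - 1) • n↓`) satisfy
`A↓ A⁺_↓ + A⁺_↓ A↓ = 1` and `A↑ A⁺_↑ + A⁺_↑ A↑ = q⁻² 1 + (1 − q⁻²) A⁺_↓ A↓`. -/
theorem deformed_fermionic_diagonal_relations
    (K : Type*) [Field K] [CharZero K] (𝒜 : Type*) [Ring 𝒜] [Algebra K 𝒜]
    (q : K) (hq : q ≠ 0) (a ap : Bool → 𝒜)
    (haa : ∀ i j, a i * a j + a j * a i = 0)
    (hpp : ∀ i j, ap i * ap j + ap j * ap i = 0)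
    (hap : ∀ i j, a i * ap j + ap j * a i = if i = j then 1 else 0) :
    let qn : 𝒜 := 1 + (q⁻¹ - 1) • (a false * ap false)
    let Apu : 𝒜 := qn * ap true
    let Au : 𝒜 := a true * qn
    let Apd : 𝒜 := ap false
    let Ad : 𝒜 := a false
    Ad * Apd + Apd * Ad = 1 ∧
      Au * Apu + Apu * Au = (q ^ 2)⁻¹ • (1 : 𝒜) + (1 - (q ^ 2)⁻¹) • (Apd * Ad) :=
  deformed_fermionic_diagonal_relations_general K 𝒜 q a ap haa hpp hap
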